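/- With finite-precision Gaussian loaders, the block-encoding error is at most twice the loader error: if G̃_p and G̃_q are unitaries on the shift factor with ‖(G̃_p − G_p) e₀‖ ≤ ε and ‖(G̃_q − G_q) e₀‖ ≤ ε, and Ũ is built from P̃ exactly as U is built from P, then for all unit vectors v and w in the data space, |⟪e₀ ⊗ e₀ ⊗ w, (Ũ − U)(e₀ ⊗ e₀ ⊗ v)⟫| ≤ 2ε; i.e. the compressed block of Ũ is within operator-norm distance 2ε of the compressed block of U. -/

import Mathlib

open scoped BigOperators Kronecker

noncomputable section

/-- The periodic grid `ℤ_N^D`. -/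
abbrev Grid (N D : ℕ) := Fin D → ZMod N

/-- The matrix of the cyclic shift operator `S_t`, `(S_t v)(j) = v (j - t)`. -/
def shiftMat (N D : ℕ) (t : Grid N D) : Matrix (Grid N D) (Grid N D) ℂ :=
  Matrix.of fun j j' => if j' = j - t then 1 else 0

/-- The Hadamard unitary on the indicator qubit. -/
def Hmat : Matrix (Fin 2) (Fin 2) ℂ :=
  ((1 / Real.sqrt 2 : ℝ) : ℂ) • !![1, 1; 1, -1]

/-- The Pauli-Z unitary on the indicator qubit. -/
def Zmat : Matrix (Fin 2) (Fin 2) ℂ := !![1, 0; 0, -1]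

/-- The rank-one projector `|e_a⟩⟨e_a|` on the indicator qubit. -/
def proj (a : Fin 2) : Matrix (Fin 2) (Fin 2) ℂ := Matrix.single a a 1

variable {T : Type*} [Fintype T] [DecidableEq T]

/-- The preparation unitary `P = (|e₀⟩⟨e₀| ⊗ G_p + |e₁⟩⟨e₁| ⊗ G_q) ∘ (H ⊗ I)` on the
indicator⊗shift factors. -/
def Pmat (Gp Gq : Matrix T T ℂ) : Matrix (Fin 2 × T) (Fin 2 × T) ℂ :=
  (proj 0 ⊗ₖ Gp + proj 1 ⊗ₖ Gq) * (Hmat ⊗ₖ (1 : Matrix T T ℂ))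

/-- Extension of an operator on the indicator⊗shift factors to the total space, by tensoring
with the identity on the data factor. -/
def extendData (N D : ℕ) (M : Matrix (Fin 2 × T) (Fin 2 × T) ℂ) :
    Matrix (Fin 2 × T × Grid N D) (Fin 2 × T × Grid N D) ℂ :=
  Matrix.of fun x y => M (x.1, x.2.1) (y.1, y.2.1) * (if x.2.2 = y.2.2 then 1 else 0)

/-- The select unitary `SEL = ∑_t I ⊗ |e_t⟩⟨e_t| ⊗ S_{τ t}`. -/
def selMat (N D : ℕ) (τ : T → Grid N D) :
    Matrix (Fin 2 × T × Grid N D) (Fin 2 × T × Grid N D) ℂ :=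
  ∑ t : T, (1 : Matrix (Fin 2) (Fin 2) ℂ) ⊗ₖ (Matrix.single t t 1 ⊗ₖ shiftMat N D (τ t))

/-- The full block-encoding unitary
`U = (P† ⊗ I) * SEL * (Z ⊗ I ⊗ I) * (P ⊗ I)`. -/
def Umat (N D : ℕ) [NeZero N] (τ : T → Grid N D) (Gp Gq : Matrix T T ℂ) :
    Matrix (Fin 2 × T × Grid N D) (Fin 2 × T × Grid N D) ℂ :=
  extendData N D (Pmat Gp Gq).conjTranspose * selMat N D τ *
    extendData N D (Zmat ⊗ₖ (1 : Matrix T T ℂ)) * extendData N D (Pmat Gp Gq)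

/-- The embedding `v ↦ e₀ ⊗ e₀ ⊗ v` of the data space into the total space. -/
def embed (N D : ℕ) (t0 : T) (v : EuclideanSpace ℂ (Grid N D)) :
    EuclideanSpace ℂ (Fin 2 × T × Grid N D) :=
  WithLp.toLp 2 (fun x => if x.1 = 0 ∧ x.2.1 = t0 then v x.2.2 else 0 : Fin 2 × T × Grid N D → ℂ)

/-- The matrix of the DoG operator `A = ∑_t (p t - q t) • S_{τ t}`. -/
def dogMat (N D : ℕ) (τ : T → Grid N D) (p q : T → ℝ) :
    Matrix (Grid N D) (Grid N D) ℂ :=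
  ∑ t : T, ((p t - q t : ℝ) : ℂ) • shiftMat N D (τ t)

/-! ### Auxiliary lemmas -/

set_option linter.unusedSectionVars false

open Matrix

section lin
variable {n : Type*} [Fintype n] [DecidableEq n]

lemma myLin_mul (A B : Matrix n n ℂ) (x : EuclideanSpace ℂ n) :
    Matrix.toEuclideanLin (A * B) x = Matrix.toEuclideanLin A (Matrix.toEuclideanLin B x) := by
  ext i; simp [Matrix.toEuclideanLin_apply, Matrix.mulVec_mulVec]

lemma myLin_adj (A : Matrix n n ℂ) (x y : EuclideanSpace ℂ n) :
    (inner ℂ (Matrix.toEuclideanLin Aᴴ x) y : ℂ) = inner ℂ x (Matrix.toEuclideanLin A y) := by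
  rw [Matrix.toEuclideanLin_conjTranspose_eq_adjoint, LinearMap.adjoint_inner_left]

lemma myLin_adj' (A : Matrix n n ℂ) (x y : EuclideanSpace ℂ n) :
    (inner ℂ (Matrix.toEuclideanLin A x) y : ℂ) = inner ℂ x (Matrix.toEuclideanLin Aᴴ y) := by
  rw [Matrix.toEuclideanLin_conjTranspose_eq_adjoint, LinearMap.adjoint_inner_right]

lemma myLin_norm {A : Matrix n n ℂ} (hA : A ∈ Matrix.unitaryGroup n ℂ)
    (x : EuclideanSpace ℂ n) : ‖Matrix.toEuclideanLin A x‖ = ‖x‖ := by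
  have h1 : Aᴴ * A = 1 := by
    have := Matrix.mem_unitaryGroup_iff'.mp hA
    rwa [Matrix.star_eq_conjTranspose] at this
  have h2 : (inner ℂ (Matrix.toEuclideanLin A x) (Matrix.toEuclideanLin A x) : ℂ) = inner ℂ x x := by
    rw [myLin_adj', ← myLin_mul, h1]
    congr 1
    ext i
    simp [Matrix.toEuclideanLin_apply, Matrix.one_mulVec]
  rw [norm_eq_sqrt_re_inner (𝕜 := ℂ) (Matrix.toEuclideanLin A x), norm_eq_sqrt_re_inner (𝕜 := ℂ) x,
    h2]

lemma eucl_norm_sq (x : EuclideanSpace ℂ n) : ‖x‖ ^ 2 = ∑ i, ‖x i‖ ^ 2 := by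
  rw [EuclideanSpace.norm_eq, Real.sq_sqrt]
  positivity

end lin

lemma extendData_mul (N D : ℕ) [NeZero N] (A B : Matrix (Fin 2 × T) (Fin 2 × T) ℂ) :
    extendData N D (A * B) = extendData N D A * extendData N D B := by
  ext ⟨a, t, j⟩ ⟨b, s, k⟩
  simp only [extendData, Matrix.mul_apply, Matrix.of_apply, Fintype.sum_prod_type]
  simp [mul_ite, ite_mul, Finset.sum_ite_eq, Finset.sum_ite_eq', Finset.sum_mul, mul_comm]

lemma extendData_conjTranspose (N D : ℕ) (A : Matrix (Fin 2 × T) (Fin 2 × T) ℂ) :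
    extendData N D Aᴴ = (extendData N D A)ᴴ := by
  ext ⟨a, t, j⟩ ⟨b, s, k⟩
  simp [extendData, Matrix.conjTranspose_apply, eq_comm, apply_ite (starRingEnd ℂ)]

lemma extendData_one (N D : ℕ) :
    extendData N D (1 : Matrix (Fin 2 × T) (Fin 2 × T) ℂ) = 1 := by
  ext ⟨a, t, j⟩ ⟨b, s, k⟩
  simp [extendData, Matrix.one_apply, Prod.ext_iff]
  split_ifs <;> simp_all

lemma extendData_sub (N D : ℕ) (A B : Matrix (Fin 2 × T) (Fin 2 × T) ℂ) :
    extendData N D (A - B) = extendData N D A - extendData N D B := by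
  ext ⟨a, t, j⟩ ⟨b, s, k⟩
  simp only [extendData, Matrix.sub_apply, Matrix.of_apply, sub_mul]

lemma extendData_unitary (N D : ℕ) [NeZero N] {A : Matrix (Fin 2 × T) (Fin 2 × T) ℂ}
    (hA : A ∈ Matrix.unitaryGroup (Fin 2 × T) ℂ) :
    extendData N D A ∈ Matrix.unitaryGroup (Fin 2 × T × Grid N D) ℂ := by
  rw [Matrix.mem_unitaryGroup_iff'] at hA ⊢
  rw [Matrix.star_eq_conjTranspose] at hA ⊢
  rw [← extendData_conjTranspose, ← extendData_mul, hA, extendData_one]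

lemma kron_conjT {m n : Type*} [Fintype m] [Fintype n] [DecidableEq m] [DecidableEq n]
    (A : Matrix m m ℂ) (B : Matrix n n ℂ) : (A ⊗ₖ B)ᴴ = Aᴴ ⊗ₖ Bᴴ := by
  ext ⟨i, j⟩ ⟨k, l⟩
  simp [Matrix.conjTranspose_apply, Matrix.kroneckerMap_apply]

lemma Hmat_conjT_mul : Hmatᴴ * Hmat = 1 := by
  have h : (((Real.sqrt 2 : ℝ) : ℂ))⁻¹ * (((Real.sqrt 2 : ℝ) : ℂ))⁻¹ = 1/2 := by
    rw [← mul_inv, ← Complex.ofReal_mul, Real.mul_self_sqrt (by norm_num)]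
    norm_num
  ext i j
  fin_cases i <;> fin_cases j <;>
    simp [Hmat, Matrix.mul_apply, Fin.sum_univ_two, Matrix.conjTranspose_apply,
      Matrix.one_apply, Complex.conj_ofReal, one_div, Complex.ofReal_inv] <;>
    linear_combination 2 * h

lemma Zmat_unitary : Zmat ∈ Matrix.unitaryGroup (Fin 2) ℂ := by
  rw [Matrix.mem_unitaryGroup_iff', Matrix.star_eq_conjTranspose]
  ext i j
  fin_cases i <;> fin_cases j <;>
    simp [Zmat, Matrix.mul_apply, Fin.sum_univ_two, Matrix.conjTranspose_apply, Matrix.one_apply]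

lemma proj_conjT (a : Fin 2) : (proj a)ᴴ = proj a := by
  ext i j
  fin_cases a <;> fin_cases i <;> fin_cases j <;>
    simp [proj, Matrix.conjTranspose_apply, Matrix.single]

lemma proj_mul (a b : Fin 2) : proj a * proj b = if a = b then proj a else 0 := by
  ext i j
  fin_cases a <;> fin_cases b <;> fin_cases i <;> fin_cases j <;>
    simp [proj, Matrix.mul_apply, Fin.sum_univ_two, Matrix.single]

lemma proj_add : proj 0 + proj 1 = (1 : Matrix (Fin 2) (Fin 2) ℂ) := by
  ext i j
  fin_cases i <;> fin_cases j <;>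
    simp [proj, Matrix.single, Matrix.one_apply]

lemma ZkronOne_unitary : Zmat ⊗ₖ (1 : Matrix T T ℂ) ∈ Matrix.unitaryGroup (Fin 2 × T) ℂ := by
  rw [Matrix.mem_unitaryGroup_iff', Matrix.star_eq_conjTranspose, kron_conjT,
    ← Matrix.mul_kronecker_mul, Matrix.conjTranspose_one, one_mul]
  have hZ : Zmatᴴ * Zmat = 1 := by
    have := Zmat_unitary
    rwa [Matrix.mem_unitaryGroup_iff', Matrix.star_eq_conjTranspose] at this
  rw [hZ, Matrix.one_kronecker_one]

lemma Pmat_unitary {Gp Gq : Matrix T T ℂ} (hp : Gp ∈ Matrix.unitaryGroup T ℂ)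
    (hq : Gq ∈ Matrix.unitaryGroup T ℂ) : Pmat Gp Gq ∈ Matrix.unitaryGroup (Fin 2 × T) ℂ := by
  rw [Matrix.mem_unitaryGroup_iff'] at hp hq ⊢
  rw [Matrix.star_eq_conjTranspose] at hp hq ⊢
  have hH : Hmatᴴ * Hmat = 1 := Hmat_conjT_mul
  set Q := proj 0 ⊗ₖ Gp + proj 1 ⊗ₖ Gq with hQdef
  have hQ : Qᴴ * Q = 1 := by
    rw [hQdef, Matrix.conjTranspose_add, kron_conjT, kron_conjT, proj_conjT, proj_conjT,
      add_mul, mul_add, mul_add, ← Matrix.mul_kronecker_mul, ← Matrix.mul_kronecker_mul,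
      ← Matrix.mul_kronecker_mul, ← Matrix.mul_kronecker_mul, proj_mul, proj_mul, proj_mul,
      proj_mul, hp, hq]
    norm_num [Matrix.zero_kronecker, ← Matrix.add_kronecker, proj_add, Matrix.one_kronecker_one]
  show (Q * (Hmat ⊗ₖ 1))ᴴ * (Q * (Hmat ⊗ₖ 1)) = 1
  rw [Matrix.conjTranspose_mul, Matrix.mul_assoc, ← Matrix.mul_assoc Qᴴ, hQ, one_mul,
    kron_conjT, ← Matrix.mul_kronecker_mul, hH, Matrix.conjTranspose_one, one_mul,
    Matrix.one_kronecker_one]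

lemma selMat_apply (N D : ℕ) [NeZero N] (τ : T → Grid N D) (x y : Fin 2 × T × Grid N D) :
    selMat N D τ x y = if x = (y.1, y.2.1, y.2.2 + τ y.2.1) then 1 else 0 := by
  obtain ⟨a, t, j⟩ := x
  obtain ⟨b, s, k⟩ := y
  simp only [selMat, Matrix.sum_apply, Matrix.kroneckerMap_apply, Matrix.one_apply,
    Matrix.single, Matrix.of_apply, shiftMat]
  rw [Finset.sum_eq_single t]
  · by_cases hab : a = b <;> by_cases hts : t = s <;>
      simp [hab, hts, Prod.ext_iff, eq_sub_iff_add_eq, eq_comm, and_comm]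
  · intro u _ hu
    simp [Matrix.single, hu, Ne.symm hu]
  · simp

lemma selMat_unitary (N D : ℕ) [NeZero N] (τ : T → Grid N D) :
    selMat N D τ ∈ Matrix.unitaryGroup (Fin 2 × T × Grid N D) ℂ := by
  rw [Matrix.mem_unitaryGroup_iff', Matrix.star_eq_conjTranspose]
  ext x y
  simp only [Matrix.mul_apply, Matrix.conjTranspose_apply, selMat_apply, Matrix.one_apply]
  have hinj : Function.Injective
      (fun z : Fin 2 × T × Grid N D => (z.1, z.2.1, z.2.2 + τ z.2.1)) := by
    rintro ⟨a, t, j⟩ ⟨b, s, k⟩ h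
    simp only [Prod.mk.injEq] at h
    obtain ⟨h1, h2, h3⟩ := h
    subst h1; subst h2
    simpa using h3
  simp only [apply_ite (star : ℂ → ℂ), star_one, star_zero, ite_mul, one_mul,
    zero_mul]
  rw [Finset.sum_ite_eq' Finset.univ ((x.1, x.2.1, x.2.2 + τ x.2.1) : Fin 2 × T × Grid N D)
    (fun z => if z = (y.1, y.2.1, y.2.2 + τ y.2.1) then (1 : ℂ) else 0)]
  simp only [Finset.mem_univ, if_true]
  by_cases h : x = y
  · subst h; simp
  · rw [if_neg, if_neg h]
    intro hc
    exact h (hinj hc)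

lemma norm_embed (N D : ℕ) [NeZero N] (t0 : T) (v : EuclideanSpace ℂ (Grid N D)) :
    ‖embed N D t0 v‖ = ‖v‖ := by
  have h : ‖embed N D t0 v‖ ^ 2 = ‖v‖ ^ 2 := by
    rw [eucl_norm_sq, eucl_norm_sq]
    simp only [embed]
    simp [Fintype.sum_prod_type, ite_and, apply_ite (‖·‖ : ℂ → ℝ), Finset.sum_ite_eq,
      Finset.sum_ite_eq', apply_ite (· ^ 2 : ℝ → ℝ)]
  nlinarith [norm_nonneg (embed N D t0 v), norm_nonneg v]

lemma extend_mulVec_embed (N D : ℕ) [NeZero N] (t0 : T)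
    (M : Matrix (Fin 2 × T) (Fin 2 × T) ℂ) (v : EuclideanSpace ℂ (Grid N D))
    (x : Fin 2 × T × Grid N D) :
    Matrix.toEuclideanLin (extendData N D M) (embed N D t0 v) x
      = M (x.1, x.2.1) (0, t0) * v x.2.2 := by
  obtain ⟨a, t, j⟩ := x
  show ∑ y : Fin 2 × T × Grid N D, extendData N D M (a, t, j) y * embed N D t0 v y = _
  simp only [extendData, embed, Matrix.of_apply]
  rw [Fintype.sum_prod_type]
  simp [Fintype.sum_prod_type, ite_and, mul_ite, ite_mul, mul_zero, zero_mul,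
    Finset.sum_ite_eq, Finset.sum_ite_eq']

lemma Pmat_col (Ap Aq : Matrix T T ℂ) (t0 : T) (a : Fin 2) (t : T) :
    Pmat Ap Aq (a, t) ((0 : Fin 2), t0)
      = ((1 / Real.sqrt 2 : ℝ) : ℂ) * (if a = 0 then Ap t t0 else Aq t t0) := by
  simp only [Pmat, Matrix.mul_apply, Fintype.sum_prod_type, Matrix.add_apply,
    Matrix.kroneckerMap_apply, proj, Matrix.single, Matrix.one_apply, Hmat,
    Matrix.smul_apply, Matrix.of_apply]
  rw [Fin.sum_univ_two]
  fin_cases a <;>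
    simp [Matrix.cons_val_zero, Matrix.cons_val_one, mul_ite, ite_mul, mul_zero, zero_mul,
      Finset.sum_ite_eq, Finset.sum_ite_eq', smul_eq_mul] <;> ring

lemma col_norm_sq (A : Matrix T T ℂ) (t0 : T) :
    ‖Matrix.toEuclideanLin A (EuclideanSpace.single t0 1)‖ ^ 2 = ∑ t, ‖A t t0‖ ^ 2 := by
  rw [eucl_norm_sq]
  congr 1
  ext t
  have h : Matrix.toEuclideanLin A (EuclideanSpace.single t0 1) t = A t t0 := by
    show (∑ s, A t s * (EuclideanSpace.single t0 (1 : ℂ)) s) = _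
    simp [EuclideanSpace.single_apply]
  rw [h]

lemma err_norm (N D : ℕ) [NeZero N] (t0 : T) (Gp Gq Gp' Gq' : Matrix T T ℂ) (ε : ℝ)
    (hGpErr : ‖Matrix.toEuclideanLin (Gp' - Gp) (EuclideanSpace.single t0 1)‖ ≤ ε)
    (hGqErr : ‖Matrix.toEuclideanLin (Gq' - Gq) (EuclideanSpace.single t0 1)‖ ≤ ε)
    (u : EuclideanSpace ℂ (Grid N D)) (hu : ‖u‖ = 1) :
    ‖Matrix.toEuclideanLin (extendData N D (Pmat Gp' Gq' - Pmat Gp Gq))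
        (embed N D t0 u)‖ ≤ ε := by
  have hε : (0 : ℝ) ≤ ε := le_trans (norm_nonneg _) hGpErr
  set X := Matrix.toEuclideanLin (extendData N D (Pmat Gp' Gq' - Pmat Gp Gq)) (embed N D t0 u)
    with hX
  have hval : ∀ x : Fin 2 × T × Grid N D, X x =
      ((1 / Real.sqrt 2 : ℝ) : ℂ) *
        (if x.1 = 0 then (Gp' - Gp) x.2.1 t0 else (Gq' - Gq) x.2.1 t0) * u x.2.2 := by
    intro x
    rw [hX, extend_mulVec_embed, Matrix.sub_apply, Pmat_col, Pmat_col]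
    by_cases h : x.1 = 0
    · simp only [if_pos h, Matrix.sub_apply]; ring
    · simp only [if_neg h, Matrix.sub_apply]; ring
  have hc : ‖((1 / Real.sqrt 2 : ℝ) : ℂ)‖ ^ 2 = 1 / 2 := by
    rw [Complex.norm_real, Real.norm_eq_abs, abs_of_nonneg (by positivity), div_pow, one_pow,
      Real.sq_sqrt (by norm_num)]
  have hS : ‖X‖ ^ 2 = (1 / 2) * ((∑ t, ‖(Gp' - Gp) t t0‖ ^ 2) + ∑ t, ‖(Gq' - Gq) t t0‖ ^ 2) := by
    rw [eucl_norm_sq]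
    have : ∀ x : Fin 2 × T × Grid N D, ‖X x‖ ^ 2 =
        (1 / 2) * ‖(if x.1 = 0 then (Gp' - Gp) x.2.1 t0 else (Gq' - Gq) x.2.1 t0)‖ ^ 2
          * ‖u x.2.2‖ ^ 2 := by
      intro x
      rw [hval x, norm_mul, norm_mul, mul_pow, mul_pow, hc]
    rw [Finset.sum_congr rfl fun x _ => this x]
    rw [Fintype.sum_prod_type, Fin.sum_univ_two]
    have hu2 : ∑ j : Grid N D, ‖u j‖ ^ 2 = 1 := by
      rw [← eucl_norm_sq, hu]; norm_num
    have h0 : ((0 : Fin 2) = 0) = True := by simp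
    have h1 : ((1 : Fin 2) = 0) = False := by simp
    simp only [Fintype.sum_prod_type, h0, h1, if_true, if_false]
    have hsum : ∀ c : T → ℝ, (∑ t : T, ∑ j : Grid N D, (1 / 2) * c t * ‖u j‖ ^ 2)
        = (1 / 2) * ∑ t : T, c t := by
      intro c
      calc ∑ t : T, ∑ j : Grid N D, (1 / 2) * c t * ‖u j‖ ^ 2
          = ∑ t : T, (1 / 2) * c t * ∑ j : Grid N D, ‖u j‖ ^ 2 :=
            Finset.sum_congr rfl fun t _ => (Finset.mul_sum _ _ _).symm
        _ = ∑ t : T, (1 / 2) * c t :=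
            Finset.sum_congr rfl fun t _ => by rw [hu2, mul_one]
        _ = (1 / 2) * ∑ t : T, c t := by rw [Finset.mul_sum]
    rw [hsum (fun t => ‖(Gp' - Gp) t t0‖ ^ 2), hsum (fun t => ‖(Gq' - Gq) t t0‖ ^ 2)]
    ring
  have hp2 : (∑ t, ‖(Gp' - Gp) t t0‖ ^ 2) ≤ ε ^ 2 := by
    rw [← col_norm_sq]
    exact pow_le_pow_left₀ (norm_nonneg _) hGpErr 2
  have hq2 : (∑ t, ‖(Gq' - Gq) t t0‖ ^ 2) ≤ ε ^ 2 := by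
    rw [← col_norm_sq]
    exact pow_le_pow_left₀ (norm_nonneg _) hGqErr 2
  have : ‖X‖ ^ 2 ≤ ε ^ 2 := by rw [hS]; nlinarith
  nlinarith [norm_nonneg X]

/-- with finite-precision Gaussian loaders, the block-encoding error is at most
twice the loader error: for all unit data vectors `v`, `w`,
`|⟪e₀⊗e₀⊗w, (Ũ - U)(e₀⊗e₀⊗v)⟫| ≤ 2ε`. -/
theorem lcu_block_encoding_precision (N D : ℕ) [NeZero N] (hD : 1 ≤ D)
    (t0 : T) (τ : T → Grid N D) (p q : T → ℝ)
    (hp : ∀ t, 0 ≤ p t) (hq : ∀ t, 0 ≤ q t)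
    (hpsum : ∑ t : T, p t = 1) (hqsum : ∑ t : T, q t = 1)
    (Gp Gq Gp' Gq' : Matrix T T ℂ)
    (hGpU : Gp ∈ Matrix.unitaryGroup T ℂ) (hGqU : Gq ∈ Matrix.unitaryGroup T ℂ)
    (hGp'U : Gp' ∈ Matrix.unitaryGroup T ℂ) (hGq'U : Gq' ∈ Matrix.unitaryGroup T ℂ)
    (hGp : ∀ t, Gp t t0 = (Real.sqrt (p t) : ℂ))
    (hGq : ∀ t, Gq t t0 = (Real.sqrt (q t) : ℂ))
    (ε : ℝ)
    (hGpErr : ‖Matrix.toEuclideanLin (Gp' - Gp) (EuclideanSpace.single t0 1)‖ ≤ ε)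
    (hGqErr : ‖Matrix.toEuclideanLin (Gq' - Gq) (EuclideanSpace.single t0 1)‖ ≤ ε)
    (v w : EuclideanSpace ℂ (Grid N D)) (hv : ‖v‖ = 1) (hw : ‖w‖ = 1) :
    ‖(@inner ℂ _ _ (embed N D t0 w)
          (Matrix.toEuclideanLin (Umat N D τ Gp' Gq' - Umat N D τ Gp Gq) (embed N D t0 v)))‖
      ≤ 2 * ε := by
  classical
  have hε : (0 : ℝ) ≤ ε := le_trans (norm_nonneg _) hGpErr
  set x := embed N D t0 w with hxdef
  set y := embed N D t0 v with hydef
  set M : Matrix (Fin 2 × T × Grid N D) (Fin 2 × T × Grid N D) ℂ :=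
    selMat N D τ * extendData N D (Zmat ⊗ₖ (1 : Matrix T T ℂ)) with hMdef
  have hMU : M ∈ Matrix.unitaryGroup (Fin 2 × T × Grid N D) ℂ :=
    mul_mem (selMat_unitary N D τ) (extendData_unitary N D ZkronOne_unitary)
  have hMHU : Mᴴ ∈ Matrix.unitaryGroup (Fin 2 × T × Grid N D) ℂ := by
    have := Unitary.star_mem hMU
    rwa [Matrix.star_eq_conjTranspose] at this
  have hEPU : extendData N D (Pmat Gp Gq) ∈ Matrix.unitaryGroup (Fin 2 × T × Grid N D) ℂ :=
    extendData_unitary N D (Pmat_unitary hGpU hGqU)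
  have hEP'U : extendData N D (Pmat Gp' Gq') ∈ Matrix.unitaryGroup (Fin 2 × T × Grid N D) ℂ :=
    extendData_unitary N D (Pmat_unitary hGp'U hGq'U)
  -- split the difference
  have hsplit : Umat N D τ Gp' Gq' - Umat N D τ Gp Gq
      = extendData N D ((Pmat Gp' Gq' - Pmat Gp Gq)ᴴ) * (M * extendData N D (Pmat Gp' Gq'))
        + extendData N D ((Pmat Gp Gq)ᴴ) *
            (M * extendData N D (Pmat Gp' Gq' - Pmat Gp Gq)) := by
    rw [Matrix.conjTranspose_sub, extendData_sub, extendData_sub, hMdef]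
    unfold Umat
    noncomm_ring
  rw [hsplit]
  have hadd : Matrix.toEuclideanLin
        (extendData N D ((Pmat Gp' Gq' - Pmat Gp Gq)ᴴ) * (M * extendData N D (Pmat Gp' Gq'))
          + extendData N D ((Pmat Gp Gq)ᴴ) *
              (M * extendData N D (Pmat Gp' Gq' - Pmat Gp Gq))) y
      = Matrix.toEuclideanLin
          (extendData N D ((Pmat Gp' Gq' - Pmat Gp Gq)ᴴ) * (M * extendData N D (Pmat Gp' Gq'))) y
        + Matrix.toEuclideanLin
            (extendData N D ((Pmat Gp Gq)ᴴ) *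
              (M * extendData N D (Pmat Gp' Gq' - Pmat Gp Gq))) y := by
    rw [map_add]; rfl
  rw [hadd, inner_add_right]
  refine le_trans (norm_add_le _ _) ?_
  -- first term
  have ht1 : ‖(@inner ℂ _ _ x (Matrix.toEuclideanLin
      (extendData N D ((Pmat Gp' Gq' - Pmat Gp Gq)ᴴ) * (M * extendData N D (Pmat Gp' Gq'))) y))‖
      ≤ ε := by
    rw [myLin_mul, extendData_conjTranspose, ← myLin_adj']
    refine le_trans (norm_inner_le_norm _ _) ?_
    have h1 : ‖Matrix.toEuclideanLin (extendData N D (Pmat Gp' Gq' - Pmat Gp Gq)) x‖ ≤ ε :=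
      err_norm N D t0 Gp Gq Gp' Gq' ε hGpErr hGqErr w hw
    have h2 : ‖Matrix.toEuclideanLin (M * extendData N D (Pmat Gp' Gq')) y‖ = 1 := by
      rw [myLin_norm (mul_mem hMU hEP'U), hydef, norm_embed, hv]
    rw [h2, mul_one]
    exact h1
  -- second term
  have ht2 : ‖(@inner ℂ _ _ x (Matrix.toEuclideanLin
      (extendData N D ((Pmat Gp Gq)ᴴ) * (M * extendData N D (Pmat Gp' Gq' - Pmat Gp Gq))) y))‖
      ≤ ε := by
    rw [myLin_mul, extendData_conjTranspose, ← myLin_adj']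
    rw [myLin_mul, ← myLin_adj]
    refine le_trans (norm_inner_le_norm _ _) ?_
    have h1 : ‖Matrix.toEuclideanLin Mᴴ
        (Matrix.toEuclideanLin (extendData N D (Pmat Gp Gq)) x)‖ = 1 := by
      rw [myLin_norm hMHU, myLin_norm hEPU, hxdef, norm_embed, hw]
    have h2 : ‖Matrix.toEuclideanLin (extendData N D (Pmat Gp' Gq' - Pmat Gp Gq)) y‖ ≤ ε :=
      err_norm N D t0 Gp Gq Gp' Gq' ε hGpErr hGqErr v hv
    rw [h1, one_mul]
    exact h2
  linarith
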